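/- arXiv:2011.05589 — 3 statements merged into one kernel-verified Lean document; each statement's English description precedes it below -/
import Mathlib

section
/- Let T > 0, n ∈ ℕ, and ρ̂ > 0. Let A : [0,T] → Mₙ(ℝ) and f : [0,T] → ℝⁿ be continuous, and suppose ⟨y, A(t) y⟩ ≥ ρ̂ ‖y‖² for all t ∈ [0,T] and all y ∈ ℝⁿ. If S : [0,T] → ℝⁿ is differentiable with S(0) = 0 and S′(t) = −A(t) S(t) + f(t) for all t ∈ [0,T], then ∫₀ᵀ ‖S(t)‖² dt ≤ ρ̂⁻² ∫₀ᵀ ‖f(t)‖² dt. -/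
/-!
Energy estimate: for `g = ‖S‖²` the equation gives `g' = -2⟨S, A S⟩ + 2⟨S, f⟩`, and coercivity
together with Young's inequality `2⟨S, f⟩ ≤ ρ̂‖S‖² + ρ̂⁻¹‖f‖²` yields `g' ≤ -ρ̂ g + ρ̂⁻¹‖f‖²`.
Integrating over `[0, T]` and using `g 0 = 0 ≤ g T` gives `ρ̂ ∫ g ≤ ρ̂⁻¹ ∫ ‖f‖²`.
-/

open Matrix Set intervalIntegral

section DotProduct

variable {ι : Type*} [Fintype ι]

theorem two_mul_dotProduct_le {ρ : ℝ} (hρ : 0 < ρ) (v w : ι → ℝ) :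
    2 * (v ⬝ᵥ w) ≤ ρ * (v ⬝ᵥ v) + ρ⁻¹ * (w ⬝ᵥ w) := by
  have hsq : 0 ≤ (ρ • v - w) ⬝ᵥ (ρ • v - w) :=
    Finset.sum_nonneg fun i _ => mul_self_nonneg _
  have hexp : (ρ • v - w) ⬝ᵥ (ρ • v - w)
      = ρ * (ρ * (v ⬝ᵥ v) + ρ⁻¹ * (w ⬝ᵥ w) - 2 * (v ⬝ᵥ w)) := by
    simp only [sub_dotProduct, dotProduct_sub, smul_dotProduct, dotProduct_smul, smul_eq_mul,
      dotProduct_comm w v]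
    field_simp
    ring
  rw [hexp] at hsq
  linarith [nonneg_of_mul_nonneg_right hsq hρ]

theorem two_mul_dotProduct_neg_add_le {ρ : ℝ} (hρ : 0 < ρ) {s v w : ι → ℝ}
    (hv : ρ * (s ⬝ᵥ s) ≤ s ⬝ᵥ v) :
    2 * (s ⬝ᵥ (-v + w)) ≤ -ρ * (s ⬝ᵥ s) + ρ⁻¹ * (w ⬝ᵥ w) := by
  rw [dotProduct_add, dotProduct_neg]
  linarith [two_mul_dotProduct_le hρ s w]

theorem ContinuousOn.dotProduct {α : Type*} [TopologicalSpace α] {s : Set α}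
    {u v : α → ι → ℝ} (hu : ContinuousOn u s) (hv : ContinuousOn v s) :
    ContinuousOn (fun t => u t ⬝ᵥ v t) s :=
  (continuous_fst.dotProduct continuous_snd).comp_continuousOn (hu.prodMk hv)

theorem HasDerivWithinAt.dotProduct_self {S : ℝ → ι → ℝ} {S' : ι → ℝ} {s : Set ℝ} {t : ℝ}
    (hS : HasDerivWithinAt S S' s t) :
    HasDerivWithinAt (fun τ => S τ ⬝ᵥ S τ) (2 * (S t ⬝ᵥ S')) s t := by
  have hSi := hasDerivWithinAt_pi.1 hS
  have hsum : HasDerivWithinAt (fun τ => ∑ i, S τ i * S τ i)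
      (∑ i, (S' i * S t i + S t i * S' i)) s t :=
    HasDerivWithinAt.fun_sum fun i _ => (hSi i).mul (hSi i)
  convert hsum using 1
  · rfl
  rw [dotProduct, Finset.mul_sum]
  exact Finset.sum_congr rfl fun i _ => by ring

end DotProduct

theorem mul_integral_le_integral_of_hasDerivWithinAt_le {g g' ψ : ℝ → ℝ} {a b ρ : ℝ}
    (hab : a ≤ b) (hg : ∀ t ∈ Icc a b, HasDerivWithinAt g (g' t) (Icc a b) t)
    (hga : g a = 0) (hgb : 0 ≤ g b) (hψ : ContinuousOn ψ (Icc a b))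
    (hg' : ∀ t ∈ Icc a b, g' t ≤ -ρ * g t + ψ t) :
    ρ * ∫ t in a..b, g t ≤ ∫ t in a..b, ψ t := by
  have hgc : ContinuousOn g (Icc a b) := fun t ht => (hg t ht).continuousWithinAt
  have hgi : IntervalIntegrable g MeasureTheory.volume a b :=
    hgc.intervalIntegrable_of_Icc hab
  have hψi : IntervalIntegrable ψ MeasureTheory.volume a b :=
    hψ.intervalIntegrable_of_Icc hab
  have hftc : g b - g a ≤ ∫ t in a..b, (-ρ * g t + ψ t) := by
    refine sub_le_integral_of_hasDeriv_right_of_le hab hgc (fun t ht => ?_)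
      ((continuousOn_const.mul hgc).add hψ).integrableOn_Icc
      (fun t ht => hg' t (Ioo_subset_Icc_self ht))
    exact ((hg t (Ioo_subset_Icc_self ht)).hasDerivAt (Icc_mem_nhds ht.1 ht.2)).hasDerivWithinAt
  rw [integral_add (hgi.const_mul _) hψi, integral_const_mul, hga] at hftc
  linarith

theorem forward_state_coercivity_estimate_general
    (T : ℝ) (hT : 0 < T) (n : ℕ) (ρhat : ℝ) (hρ : 0 < ρhat)
    (A : ℝ → Matrix (Fin n) (Fin n) ℝ) (f : ℝ → (Fin n → ℝ))
    (hfc : ContinuousOn f (Set.Icc 0 T))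
    (hcoer : ∀ t ∈ Set.Icc (0 : ℝ) T, ∀ y : Fin n → ℝ,
      ρhat * (y ⬝ᵥ y) ≤ y ⬝ᵥ (A t *ᵥ y))
    (S : ℝ → (Fin n → ℝ)) (hS0 : S 0 = 0)
    (hS : ∀ t ∈ Set.Icc (0 : ℝ) T,
      HasDerivWithinAt S (-(A t *ᵥ S t) + f t) (Set.Icc (0 : ℝ) T) t) :
    (∫ t in (0:ℝ)..T, S t ⬝ᵥ S t) ≤ ρhat⁻¹ ^ 2 * ∫ t in (0:ℝ)..T, f t ⬝ᵥ f t := by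
  have energy : ρhat * ∫ t in (0:ℝ)..T, S t ⬝ᵥ S t ≤ ∫ t in (0:ℝ)..T, ρhat⁻¹ * (f t ⬝ᵥ f t) :=
    mul_integral_le_integral_of_hasDerivWithinAt_le hT.le
      (fun t ht => (hS t ht).dotProduct_self) (by simp [hS0])
      (Finset.sum_nonneg fun i _ => mul_self_nonneg _) (continuousOn_const.mul (hfc.dotProduct hfc))
      (fun t ht => two_mul_dotProduct_neg_add_le hρ (hcoer t ht (S t)))
  rw [integral_const_mul] at energy
  calc (∫ t in (0:ℝ)..T, S t ⬝ᵥ S t)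
      = ρhat⁻¹ * (ρhat * ∫ t in (0:ℝ)..T, S t ⬝ᵥ S t) := by field_simp
    _ ≤ ρhat⁻¹ * (ρhat⁻¹ * ∫ t in (0:ℝ)..T, f t ⬝ᵥ f t) := by gcongr
    _ = ρhat⁻¹ ^ 2 * ∫ t in (0:ℝ)..T, f t ⬝ᵥ f t := by ring

/-- Coercivity estimate for the forward impact-state equation: if
`⟨y, A(t) y⟩ ≥ ρ̂ ‖y‖²` and `S' = −A S + f` with `S 0 = 0`, then
`∫₀ᵀ ‖S‖² ≤ ρ̂⁻² ∫₀ᵀ ‖f‖²` (squared Euclidean norms written as dot products). -/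
theorem forward_state_coercivity_estimate
    (T : ℝ) (hT : 0 < T) (n : ℕ) (ρhat : ℝ) (hρ : 0 < ρhat)
    (A : ℝ → Matrix (Fin n) (Fin n) ℝ) (f : ℝ → (Fin n → ℝ))
    (hAc : ContinuousOn A (Set.Icc 0 T)) (hfc : ContinuousOn f (Set.Icc 0 T))
    (hcoer : ∀ t ∈ Set.Icc (0 : ℝ) T, ∀ y : Fin n → ℝ,
      ρhat * (y ⬝ᵥ y) ≤ y ⬝ᵥ (A t *ᵥ y))
    (S : ℝ → (Fin n → ℝ)) (hS0 : S 0 = 0)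
    (hS : ∀ t ∈ Set.Icc (0 : ℝ) T,
      HasDerivWithinAt S (-(A t *ᵥ S t) + f t) (Set.Icc (0 : ℝ) T) t) :
    (∫ t in (0:ℝ)..T, S t ⬝ᵥ S t) ≤ ρhat⁻¹ ^ 2 * ∫ t in (0:ℝ)..T, f t ⬝ᵥ f t :=
  forward_state_coercivity_estimate_general T hT n ρhat hρ A f hfc hcoer S hS0 hS
end

section
/- Let T > 0, n ∈ ℕ, and φ₀₀, φ₀₁, φ₁₀, φ₁₁, D_T ∈ Mₙ(ℝ). Let 𝒫 ∈ M₂ₙ(ℝ) be the block matrix with blocks [[φ₀₀, φ₀₁], [φ₁₀, φ₁₁]], and for t ∈ [0,T] set Φ(t) := exp((T−t)𝒫) (matrix exponential). Let L := (D_T | −Iₙ) ∈ Mₙ,₂ₙ(ℝ), let E₁ := (Iₙ ; 0ₙ) and E₂ := (0ₙ ; Iₙ) ∈ M₂ₙ,ₙ(ℝ), and set M(t) := L Φ(t) E₂. Assume M(t) is invertible for every t ∈ [0,T], and define D(t) := −M(t)⁻¹ L Φ(t) E₁. Then D(T) = D_T, and D is differentiable on [0,T] with D′(t) = −D(t) φ₀₁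 D(t) − D(t) φ₀₀ + φ₁₁ D(t) + φ₁₀ for every t ∈ [0,T]. -/
/-!
Writing `X(t) = L Φ(t)`, the fundamental solution gives `X' = -X 𝒫`, so the two blocks
`M = X E₂` and `N = X E₁` solve the linear system `N' = -(N φ₀₀ + M φ₁₀)`,
`M' = -(N φ₀₁ + M φ₁₁)`. Differentiating `D = -M⁻¹ N` with `(M⁻¹)' = -M⁻¹ M' M⁻¹` and
substituting `M⁻¹ N = -D` yields the Riccati equation; at `t = T` we have `Φ = 1`, so
`M(T) = -1` and `D(T) = D_T`.
-/

open Matrix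

section BanachAlgebra

variable {𝕜 R : Type*} [NontriviallyNormedField 𝕜] [NormedRing R] [HasSummableGeomSeries R]
  [NormedAlgebra 𝕜 R]

theorem HasDerivAt.ringInverse {M : 𝕜 → R} {M' : R} {t : 𝕜} (hM : HasDerivAt M M' t)
    (ht : IsUnit (M t)) :
    HasDerivAt (fun s => Ring.inverse (M s))
      (-(Ring.inverse (M t) * M' * Ring.inverse (M t))) t := by
  have h := (hasFDerivAt_ringInverse (𝕜 := 𝕜) ht.unit).comp_hasDerivAt_of_eq t hM ht.unit_spec
  simp only [ht.unit_spec, ← Ring.inverse_unit] at h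
  exact h

theorem HasDerivAt.neg_ringInverse_mul {M N D : 𝕜 → R} {a b c d : R} {t : 𝕜}
    (hM : HasDerivAt M (-(N t * b + M t * d)) t) (hN : HasDerivAt N (-(N t * a + M t * c)) t)
    (ht : IsUnit (M t)) (hD : ∀ s, D s = -(Ring.inverse (M s) * N s)) :
    HasDerivAt D (-(D t * b * D t) - D t * a + d * D t + c) t := by
  rw [funext hD]
  refine ((hM.ringInverse ht).mul hN).neg.congr_deriv ?_
  simp only [mul_add, add_mul, neg_mul, mul_neg, neg_neg, ← mul_assoc,
    Ring.inverse_mul_cancel _ ht, one_mul]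
  abel

end BanachAlgebra

theorem hasDerivAt_exp_sub_smul {𝕂 𝔸 : Type*} [RCLike 𝕂] [NormedRing 𝔸] [NormedAlgebra 𝕂 𝔸]
    [CompleteSpace 𝔸] (T : 𝕂) (P : 𝔸) (t : 𝕂) :
    HasDerivAt (fun s => NormedSpace.exp ((T - s) • P))
      (-(NormedSpace.exp ((T - t) • P) * P)) t := by
  have h := (hasDerivAt_exp_smul_const P (T - t)).scomp t ((hasDerivAt_id t).const_sub T)
  simpa only [Function.comp_def, neg_one_smul] using h

namespace Matrix

variable {α k l m n o p : Type*}

section Blocks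

variable [Fintype m] [Fintype n] [Fintype o] [Fintype p] [DecidableEq m] [DecidableEq o]
  [Semiring α] (A : Matrix m n α) (B : Matrix m p α) (C : Matrix o n α) (D : Matrix o p α)

theorem fromBlocks_mul_fromRows_one_zero [DecidableEq n] :
    fromBlocks A B C D * fromRows (1 : Matrix n n α) (0 : Matrix p n α) =
      fromRows (1 : Matrix m m α) (0 : Matrix o m α) * A +
        fromRows (0 : Matrix m o α) (1 : Matrix o o α) * C := by
  rw [fromBlocks_mul_fromRows, fromRows_mul, fromRows_mul]
  ext (_ | _) _ <;> simp

theorem fromBlocks_mul_fromRows_zero_one [DecidableEq p] :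
    fromBlocks A B C D * fromRows (0 : Matrix n p α) (1 : Matrix p p α) =
      fromRows (1 : Matrix m m α) (0 : Matrix o m α) * B +
        fromRows (0 : Matrix m o α) (1 : Matrix o o α) * D := by
  rw [fromBlocks_mul_fromRows, fromRows_mul, fromRows_mul]
  ext (_ | _) _ <;> simp

end Blocks

/- `HasDerivAt` only sees the topology of the matrix space, which every matrix norm induces;
the `L∞` operator norm merely provides the Banach algebra structure used in the proofs. -/
section LinftyOpNorm

attribute [local instance] Matrix.linftyOpNormedAddCommGroup Matrix.linftyOpNormedSpace
  Matrix.linftyOpNormedRing Matrix.linftyOpNormedAlgebra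

theorem _root_.HasDerivAt.const_matrix_mul_mul_const [Fintype k] [Fintype l] [Fintype m]
    [Fintype n] {Φ : ℝ → Matrix l m ℝ} {Φ' : Matrix l m ℝ} {t : ℝ}
    (hΦ : HasDerivAt Φ Φ' t) (L : Matrix k l ℝ) (E : Matrix m n ℝ) :
    HasDerivAt (fun s => L * Φ s * E) (L * Φ' * E) t :=
  (mulRightLinearMap k ℝ E ∘ₗ mulLeftLinearMap m ℝ L).toContinuousLinearMap.hasFDerivAt
    |>.comp_hasDerivAt t hΦ

theorem hasDerivAt_exp_sub_smul [Fintype m] [DecidableEq m] (T : ℝ) (P : Matrix m m ℝ) (t : ℝ) :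
    HasDerivAt (fun s => NormedSpace.exp ((T - s) • P))
      (-(NormedSpace.exp ((T - t) • P) * P)) t :=
  _root_.hasDerivAt_exp_sub_smul T P t

theorem hasDerivAt_riccati_of_fundamental_solution [Fintype m] [Fintype n] [DecidableEq n]
    {P : Matrix m m ℝ} {L : Matrix n m ℝ}
    {E₁ E₂ : Matrix m n ℝ} {a b c d : Matrix n n ℝ}
    (hPE₁ : P * E₁ = E₁ * a + E₂ * c) (hPE₂ : P * E₂ = E₁ * b + E₂ * d)
    {Φ : ℝ → Matrix m m ℝ} {M D : ℝ → Matrix n n ℝ} (hM : ∀ s, M s = L * Φ s * E₂)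
    (hD : ∀ s, D s = -((M s)⁻¹ * L * Φ s * E₁)) {t : ℝ} (hΦ : HasDerivAt Φ (-(Φ t * P)) t)
    (ht : IsUnit (M t)) :
    HasDerivAt D (-(D t * b * D t) - D t * a + d * D t + c) t := by
  have hLΦE (E : Matrix m n ℝ) :
      HasDerivAt (fun s => L * Φ s * E) (-(L * Φ t * (P * E))) t :=
    (hΦ.const_matrix_mul_mul_const L E).congr_deriv (by
      simp only [Matrix.mul_neg, Matrix.neg_mul, Matrix.mul_assoc])
  have hM' : HasDerivAt M (-(L * Φ t * E₁ * b + M t * d)) t := by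
    rw [funext hM]
    refine (hLΦE E₂).congr_deriv ?_
    simp only [hPE₂, Matrix.mul_add, Matrix.mul_assoc]
  have hN' : HasDerivAt (fun s => L * Φ s * E₁) (-(L * Φ t * E₁ * a + M t * c)) t := by
    refine (hLΦE E₁).congr_deriv ?_
    simp only [hM t, hPE₁, Matrix.mul_add, Matrix.mul_assoc]
  refine hM'.neg_ringInverse_mul hN' ht fun s => ?_
  rw [hD s, nonsing_inv_eq_ringInverse]
  simp only [Matrix.mul_assoc]

end LinftyOpNorm

end Matrix

theorem riccati_explicit_solution_general
    (T : ℝ) (n : ℕ)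
    (φ00 φ01 φ10 φ11 DT : Matrix (Fin n) (Fin n) ℝ)
    (P : Matrix (Fin n ⊕ Fin n) (Fin n ⊕ Fin n) ℝ)
    (hP : P = Matrix.fromBlocks φ00 φ01 φ10 φ11)
    (Φ : ℝ → Matrix (Fin n ⊕ Fin n) (Fin n ⊕ Fin n) ℝ)
    (hΦ : ∀ t, Φ t = NormedSpace.exp ((T - t) • P))
    (L : Matrix (Fin n) (Fin n ⊕ Fin n) ℝ)
    (hL : L = Matrix.fromCols DT (-(1 : Matrix (Fin n) (Fin n) ℝ)))
    (E₁ E₂ : Matrix (Fin n ⊕ Fin n) (Fin n) ℝ)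
    (hE₁ : E₁ = Matrix.fromRows (1 : Matrix (Fin n) (Fin n) ℝ) 0)
    (hE₂ : E₂ = Matrix.fromRows 0 (1 : Matrix (Fin n) (Fin n) ℝ))
    (M : ℝ → Matrix (Fin n) (Fin n) ℝ)
    (hM : ∀ t, M t = L * Φ t * E₂)
    (hMinv : ∀ t ∈ Set.Icc (0 : ℝ) T, IsUnit (M t))
    (D : ℝ → Matrix (Fin n) (Fin n) ℝ)
    (hD : ∀ t, D t = -((M t)⁻¹ * L * Φ t * E₁)) :
    D T = DT ∧
      ∀ t ∈ Set.Icc (0 : ℝ) T,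
        HasDerivAt D (-(D t * φ01 * D t) - D t * φ00 + φ11 * D t + φ10) t := by
  have hΦT : Φ T = 1 := by simp [hΦ]
  have hMT : M T = -1 := by simp [hM, hΦT, hL, hE₂, fromCols_mul_fromRows]
  have hMT_inv : (M T)⁻¹ = -1 := inv_eq_left_inv (by simp [hMT])
  refine ⟨by simp [hD, hMT_inv, hΦT, hL, hE₁, fromCols_mul_fromRows], fun t ht => ?_⟩
  have hPE₁ : P * E₁ = E₁ * φ00 + E₂ * φ10 := by
    rw [hP, hE₁, hE₂, fromBlocks_mul_fromRows_one_zero]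
  have hPE₂ : P * E₂ = E₁ * φ01 + E₂ * φ11 := by
    rw [hP, hE₁, hE₂, fromBlocks_mul_fromRows_zero_one]
  have hΦ' : HasDerivAt Φ (-(Φ t * P)) t := by
    rw [funext hΦ]
    exact Matrix.hasDerivAt_exp_sub_smul T P t
  exact hasDerivAt_riccati_of_fundamental_solution hPE₁ hPE₂ hM hD hΦ' (hMinv t ht)

/-- Explicit solution of the matrix Riccati terminal value problem via the
fundamental solution `Φ(t) = exp((T−t)𝒫)` of the linear forward–backward ODE
system: `D(t) = −(LΦ(t)E₂)⁻¹ LΦ(t)E₁` satisfies `D(T) = D_T` and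
`D' = −Dφ₀₁D − Dφ₀₀ + φ₁₁D + φ₁₀` on `[0,T]`. -/
theorem riccati_explicit_solution
    (T : ℝ) (hT : 0 < T) (n : ℕ)
    (φ00 φ01 φ10 φ11 DT : Matrix (Fin n) (Fin n) ℝ)
    (P : Matrix (Fin n ⊕ Fin n) (Fin n ⊕ Fin n) ℝ)
    (hP : P = Matrix.fromBlocks φ00 φ01 φ10 φ11)
    (Φ : ℝ → Matrix (Fin n ⊕ Fin n) (Fin n ⊕ Fin n) ℝ)
    (hΦ : ∀ t, Φ t = NormedSpace.exp ((T - t) • P))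
    (L : Matrix (Fin n) (Fin n ⊕ Fin n) ℝ)
    (hL : L = Matrix.fromCols DT (-(1 : Matrix (Fin n) (Fin n) ℝ)))
    (E₁ E₂ : Matrix (Fin n ⊕ Fin n) (Fin n) ℝ)
    (hE₁ : E₁ = Matrix.fromRows (1 : Matrix (Fin n) (Fin n) ℝ) 0)
    (hE₂ : E₂ = Matrix.fromRows 0 (1 : Matrix (Fin n) (Fin n) ℝ))
    (M : ℝ → Matrix (Fin n) (Fin n) ℝ)
    (hM : ∀ t, M t = L * Φ t * E₂)
    (hMinv : ∀ t ∈ Set.Icc (0 : ℝ) T, IsUnit (M t))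
    (D : ℝ → Matrix (Fin n) (Fin n) ℝ)
    (hD : ∀ t, D t = -((M t)⁻¹ * L * Φ t * E₁)) :
    D T = DT ∧
      ∀ t ∈ Set.Icc (0 : ℝ) T,
        HasDerivAt D (-(D t * φ01 * D t) - D t * φ00 + φ11 * D t + φ10) t :=
  riccati_explicit_solution_general T n φ00 φ01 φ10 φ11 DT P hP Φ hΦ L hL E₁ E₂ hE₁ hE₂ M hM hMinv D
    hD
end

section
/- Let T > 0, n ∈ ℕ, φ₀₀, φ₀₁, φ₁₀, φ₁₁, D_T ∈ Mₙ(ℝ), F⁰ ∈ ℝⁿ, and F₀ ∈ ℝⁿ. Suppose D : [0,T] → Mₙ(ℝ) and D⁰ : [0,T] → ℝⁿ are continuously differentiable with D(T) = D_T, D′ = −D φ₀₁ D − D φ₀₀ + φ₁₁ D + φ₁₀, D⁰(T) = 0, and (D⁰)′ = (φ₁₁ − D φ₀₁) D⁰ − D F⁰ on [0,T]. Suppose 𝔽 : [0,T] → ℝⁿ is differentiable with 𝔽(0) = F₀ and 𝔽′ = (φ₀₀ + φ₀₁ D) 𝔽 + φ₀₁ D⁰ + F⁰ on [0,T]. Then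 𝔹 := D𝔽 + D⁰ satisfies 𝔽′ = φ₀₀ 𝔽 + φ₀₁ 𝔹 + F⁰ and 𝔹′ = φ₁₀ 𝔽 + φ₁₁ 𝔹 on [0,T], together with the terminal condition 𝔹(T) = D_T 𝔽(T). -/
open Matrix Set

attribute [local instance] Matrix.normedAddCommGroup Matrix.normedSpace

/-! By the product rule `𝔹′ = D′𝔽 + D𝔽′ + (D⁰)′`. Substituting the three ODEs, the Riccati
term `D φ₀₁ D 𝔽` and the terms `D φ₀₀ 𝔽`, `D φ₀₁ D⁰`, `D F⁰` cancel, leaving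
`φ₁₀ 𝔽 + φ₁₁ (D𝔽 + D⁰)`. -/

theorem HasDerivWithinAt.matrix_mulVec {𝕜 : Type*} [NontriviallyNormedField 𝕜] [CompleteSpace 𝕜]
    {m n : Type*} [Fintype m] [Fintype n] {A : 𝕜 → Matrix m n 𝕜} {A' : Matrix m n 𝕜}
    {v : 𝕜 → n → 𝕜} {v' : n → 𝕜} {s : Set 𝕜} {x : 𝕜}
    (hA : HasDerivWithinAt A A' s x) (hv : HasDerivWithinAt v v' s x) :
    HasDerivWithinAt (fun t => A t *ᵥ v t) (A' *ᵥ v x + A x *ᵥ v') s x := by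
  rw [add_comm]
  exact (mulVecBilin 𝕜 𝕜 : Matrix m n 𝕜 →ₗ[𝕜] _ →ₗ[𝕜] _).toContinuousBilinearMap
    |>.hasDerivWithinAt_of_bilinear hA hv

namespace Matrix

variable {R n : Type*} [Ring R] [Fintype n]

theorem add_mul_mulVec_add_mulVec (A B D : Matrix n n R) (f d : n → R) :
    (A + B * D) *ᵥ f + B *ᵥ d = A *ᵥ f + B *ᵥ (D *ᵥ f + d) := by
  simp only [add_mulVec, mulVec_add, ← mulVec_mulVec]
  abel

theorem riccati_ansatz_deriv_eq (φ00 φ01 φ10 φ11 D : Matrix n n R) (f d c : n → R) :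
    (-(D * φ01 * D) - D * φ00 + φ11 * D + φ10) *ᵥ f
        + D *ᵥ ((φ00 + φ01 * D) *ᵥ f + φ01 *ᵥ d + c) + ((φ11 - D * φ01) *ᵥ d - D *ᵥ c)
      = φ10 *ᵥ f + φ11 *ᵥ (D *ᵥ f + d) := by
  simp only [add_mulVec, sub_mulVec, neg_mulVec, mulVec_add, ← mulVec_mulVec]
  abel

end Matrix

theorem affine_ansatz_verification_general
    (T : ℝ) (n : ℕ)
    (φ00 φ01 φ10 φ11 DT : Matrix (Fin n) (Fin n) ℝ)
    (F0vec : Fin n → ℝ)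
    (D : ℝ → Matrix (Fin n) (Fin n) ℝ) (D0 : ℝ → (Fin n → ℝ))
    (𝔽 : ℝ → (Fin n → ℝ))
    (hDT : D T = DT)
    (hD : ∀ t ∈ Set.Icc (0 : ℝ) T,
      HasDerivWithinAt D (-(D t * φ01 * D t) - D t * φ00 + φ11 * D t + φ10)
        (Set.Icc (0 : ℝ) T) t)
    (hD0T : D0 T = 0)
    (hD0 : ∀ t ∈ Set.Icc (0 : ℝ) T,
      HasDerivWithinAt D0 ((φ11 - D t * φ01) *ᵥ D0 t - D t *ᵥ F0vec)
        (Set.Icc (0 : ℝ) T) t)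
    (h𝔽 : ∀ t ∈ Set.Icc (0 : ℝ) T,
      HasDerivWithinAt 𝔽 ((φ00 + φ01 * D t) *ᵥ 𝔽 t + φ01 *ᵥ D0 t + F0vec)
        (Set.Icc (0 : ℝ) T) t)
    (𝔹 : ℝ → (Fin n → ℝ))
    (h𝔹 : ∀ t, 𝔹 t = D t *ᵥ 𝔽 t + D0 t) :
    (∀ t ∈ Set.Icc (0 : ℝ) T,
        HasDerivWithinAt 𝔽 (φ00 *ᵥ 𝔽 t + φ01 *ᵥ 𝔹 t + F0vec)
          (Set.Icc (0 : ℝ) T) t ∧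
        HasDerivWithinAt 𝔹 (φ10 *ᵥ 𝔽 t + φ11 *ᵥ 𝔹 t)
          (Set.Icc (0 : ℝ) T) t) ∧
      𝔹 T = DT *ᵥ 𝔽 T := by
  have h𝔹_eq : 𝔹 = fun t => D t *ᵥ 𝔽 t + D0 t := funext h𝔹
  refine ⟨fun t ht => ⟨?_, ?_⟩, by rw [h𝔹, hDT, hD0T, add_zero]⟩
  · rw [h𝔹]
    exact (h𝔽 t ht).congr_deriv (by rw [add_mul_mulVec_add_mulVec])
  · rw [h𝔹_eq, ← riccati_ansatz_deriv_eq φ00]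
    exact ((hD t ht).matrix_mulVec (h𝔽 t ht)).add (hD0 t ht)

/-- Verification of the affine ansatz `𝔹 = D𝔽 + D⁰`: if `D` solves the matrix
Riccati terminal value problem, `D⁰` the associated linear terminal value
problem, and `𝔽` the closed-loop forward ODE, then `(𝔽, 𝔹)` solves the linear
forward–backward system with terminal condition `𝔹(T) = D_T 𝔽(T)`. -/
theorem affine_ansatz_verification
    (T : ℝ) (hT : 0 < T) (n : ℕ)
    (φ00 φ01 φ10 φ11 DT : Matrix (Fin n) (Fin n) ℝ)
    (F0vec F₀ : Fin n → ℝ)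
    (D : ℝ → Matrix (Fin n) (Fin n) ℝ) (D0 : ℝ → (Fin n → ℝ))
    (𝔽 : ℝ → (Fin n → ℝ))
    (hDT : D T = DT)
    (hD : ∀ t ∈ Set.Icc (0 : ℝ) T,
      HasDerivWithinAt D (-(D t * φ01 * D t) - D t * φ00 + φ11 * D t + φ10)
        (Set.Icc (0 : ℝ) T) t)
    (hD0T : D0 T = 0)
    (hD0 : ∀ t ∈ Set.Icc (0 : ℝ) T,
      HasDerivWithinAt D0 ((φ11 - D t * φ01) *ᵥ D0 t - D t *ᵥ F0vec)
        (Set.Icc (0 : ℝ) T) t)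
    (h𝔽0 : 𝔽 0 = F₀)
    (h𝔽 : ∀ t ∈ Set.Icc (0 : ℝ) T,
      HasDerivWithinAt 𝔽 ((φ00 + φ01 * D t) *ᵥ 𝔽 t + φ01 *ᵥ D0 t + F0vec)
        (Set.Icc (0 : ℝ) T) t)
    (𝔹 : ℝ → (Fin n → ℝ))
    (h𝔹 : ∀ t, 𝔹 t = D t *ᵥ 𝔽 t + D0 t) :
    (∀ t ∈ Set.Icc (0 : ℝ) T,
        HasDerivWithinAt 𝔽 (φ00 *ᵥ 𝔽 t + φ01 *ᵥ 𝔹 t + F0vec)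
          (Set.Icc (0 : ℝ) T) t ∧
        HasDerivWithinAt 𝔹 (φ10 *ᵥ 𝔽 t + φ11 *ᵥ 𝔹 t)
          (Set.Icc (0 : ℝ) T) t) ∧
      𝔹 T = DT *ᵥ 𝔽 T :=
  affine_ansatz_verification_general T n φ00 φ01 φ10 φ11 DT F0vec D D0 𝔽 hDT hD hD0T hD0 h𝔽 𝔹 h𝔹
end
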